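/- Suppose ε ∈ (0,1), total endowment e = Σ_i e_i, ε' = ε³/e, and for good j we have Σ_i x_{ij} p_j ≥ ε², where x_{ij} = h_{ij} + y_{ij} with h, y ≥ 0. Then the money ε'·Σ_s Σ_{j'} z_{sj'} p_{j'} required to consume oversupplied goods, where Σ_s Σ_{j'} z_{sj'} p_{j'} ≤ e, is at most the money ((ε² + 2ε)Σ_i h_{ij} + ε Σ_i y_{ij})·p_j returned to consumers by one price decrease on good j. In particular the assumption that the required money strictly exceeds the returned money leads to a contradiction. -/

import Mathlib

/-!
Since the production revenue is at most `E`, the required money `ε' · revenue` is at most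
`ε' E = ε³ = ε · ε²`, and the demand hypothesis bounds this by `ε (Σ h + Σ y) p_j`. The
returned money exceeds that by `(ε² + ε) (Σ h) p_j ≥ 0`.
-/

open Finset

lemma mul_add_mul_le_returned_money {ε H Y p : ℝ} (hε : 0 ≤ ε) (hH : 0 ≤ H) (hp : 0 ≤ p) :
    ε * ((H + Y) * p) ≤ ((ε ^ 2 + 2 * ε) * H + ε * Y) * p := by
  have hgap : 0 ≤ (ε ^ 2 + ε) * H * p := mul_nonneg (mul_nonneg (by positivity) hH) hp
  linarith

theorem decrease_price_once_general
    {ι σ κ : Type*} [Fintype ι] [Fintype σ] [Fintype κ]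
    (E ε ε' : ℝ) (hEpos : 0 < E)
    (hε : 0 < ε) (hε' : ε' = ε ^ 3 / E)
    (h y : ι → κ → ℝ) (x : ι → κ → ℝ) (z : σ → κ → ℝ) (p : κ → ℝ)
    (hh : ∀ i j, 0 ≤ h i j)
    (hx : ∀ i j, x i j = h i j + y i j)
    (hp : ∀ j, 0 < p j)
    (hrev : ∑ s, ∑ j', z s j' * p j' ≤ E)
    (j : κ) (hdemand : ε ^ 2 ≤ ∑ i, x i j * p j) :
    (ε' * ∑ s, ∑ j', z s j' * p j'
      ≤ ((ε ^ 2 + 2 * ε) * ∑ i, h i j + ε * ∑ i, y i j) * p j) ∧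
    ¬ (((ε ^ 2 + 2 * ε) * ∑ i, h i j + ε * ∑ i, y i j) * p j
        < ε' * ∑ s, ∑ j', z s j' * p j') := by
  have hdemand_split : ∑ i, x i j * p j = (∑ i, h i j + ∑ i, y i j) * p j := by
    simp only [hx, ← sum_mul, sum_add_distrib]
  have key : ε' * ∑ s, ∑ j', z s j' * p j'
      ≤ ((ε ^ 2 + 2 * ε) * ∑ i, h i j + ε * ∑ i, y i j) * p j :=
    calc ε' * ∑ s, ∑ j', z s j' * p j'
        ≤ ε ^ 3 / E * E := by rw [hε']; gcongr
      _ = ε * ε ^ 2 := by rw [div_mul_cancel₀ _ hEpos.ne']; ring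
      _ ≤ ε * ((∑ i, h i j + ∑ i, y i j) * p j) := by
        rw [← hdemand_split]; exact mul_le_mul_of_nonneg_left hdemand hε.le
      _ ≤ _ := mul_add_mul_le_returned_money hε.le (sum_nonneg fun i _ => hh i j) (hp j).le
  exact ⟨key, key.not_gt⟩

/-- Arithmetic core of the lemma that `decrease_price` occurs at most once per good
per iteration: the money required to consume oversupplied goods is at most the money
returned to consumers by one price decrease on good `j`; assuming the contrary leads
to a contradiction. -/
theorem decrease_price_once
    {ι σ κ : Type*} [Fintype ι] [Fintype σ] [Fintype κ]
    (e : ι → ℝ) (E ε ε' : ℝ) (hE : E = ∑ i, e i) (hEpos : 0 < E)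
    (hε : 0 < ε) (hε1 : ε < 1) (hε' : ε' = ε ^ 3 / E)
    (h y : ι → κ → ℝ) (x : ι → κ → ℝ) (z : σ → κ → ℝ) (p : κ → ℝ)
    (hh : ∀ i j, 0 ≤ h i j) (hy : ∀ i j, 0 ≤ y i j)
    (hx : ∀ i j, x i j = h i j + y i j)
    (hp : ∀ j, 0 < p j)
    (hrev : ∑ s, ∑ j', z s j' * p j' ≤ E)
    (hrevpos : 0 ≤ ∑ s, ∑ j', z s j' * p j')
    (j : κ) (hdemand : ε ^ 2 ≤ ∑ i, x i j * p j) :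
    (ε' * ∑ s, ∑ j', z s j' * p j'
      ≤ ((ε ^ 2 + 2 * ε) * ∑ i, h i j + ε * ∑ i, y i j) * p j) ∧
    ¬ (((ε ^ 2 + 2 * ε) * ∑ i, h i j + ε * ∑ i, y i j) * p j
        < ε' * ∑ s, ∑ j', z s j' * p j') :=
  decrease_price_once_general E ε ε' hEpos hε hε' h y x z p hh hx hp hrev j hdemand
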